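/- Assume moreover f' > 0 (hence g' < 0) on I. Fix (u,v) ∈ I × J. Then the mean curvature vector of the meridian surface of parabolic type is lightlike at (u,v), i.e. ⟨H(u,v),H(u,v)⟩ = 0, if and only if κ̄(v)² = (f(u)(f''(u)g'(u) − f'(u)g''(u)) + 2f'(u)g'(u)f'(u))² / (−2f'(u)g'(u))³, where κ̄(v) = (φφ̈ − 2φ̇² − φ²)/(φ̇² + φ²)^{3/2}. -/

import Mathlib

namespace MeridianParabolic

noncomputable section

/-- The Minkowski inner product of signature (3,1) on `ℝ⁴`:
`⟨x,y⟩ = x₁y₁ + x₂y₂ + x₃y₃ − x₄y₄`. -/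
def mink (x y : Fin 4 → ℝ) : ℝ := x 0 * y 0 + x 1 * y 1 + x 2 * y 2 - x 3 * y 3

/-- The first standard basis vector `e₁`. -/
def e1 : Fin 4 → ℝ := ![1, 0, 0, 0]

/-- The second standard basis vector `e₂`. -/
def e2 : Fin 4 → ℝ := ![0, 1, 0, 0]

/-- The lightlike vector `ξ₁ = (e₃ + e₄)/√2`. -/
def xi1 : Fin 4 → ℝ := ![0, 0, 1 / Real.sqrt 2, 1 / Real.sqrt 2]

/-- The lightlike vector `ξ₂ = (−e₃ + e₄)/√2`. -/
def xi2 : Fin 4 → ℝ := ![0, 0, -(1 / Real.sqrt 2), 1 / Real.sqrt 2]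

/-- The meridian surface of parabolic type
`z(u,v) = fφ cos v · e₁ + fφ sin v · e₂ + (fφ²/2 + g) ξ₁ + f ξ₂`. -/
def z (f g φ : ℝ → ℝ) (u v : ℝ) : Fin 4 → ℝ :=
  (f u * φ v * Real.cos v) • e1 + (f u * φ v * Real.sin v) • e2 +
    (f u * (φ v) ^ 2 / 2 + g u) • xi1 + f u • xi2

/-- The partial derivative `z_u`. -/
def zu (f g φ : ℝ → ℝ) (u v : ℝ) : Fin 4 → ℝ := deriv (fun t => z f g φ t v) u

/-- The partial derivative `z_v`. -/
def zv (f g φ : ℝ → ℝ) (u v : ℝ) : Fin 4 → ℝ := deriv (fun t => z f g φ u t) v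

/-- The second partial derivative `z_uu`. -/
def zuu (f g φ : ℝ → ℝ) (u v : ℝ) : Fin 4 → ℝ := deriv (fun t => zu f g φ t v) u

/-- The second partial derivative `z_uv`. -/
def zuv (f g φ : ℝ → ℝ) (u v : ℝ) : Fin 4 → ℝ := deriv (fun t => zu f g φ u t) v

/-- The second partial derivative `z_vv`. -/
def zvv (f g φ : ℝ → ℝ) (u v : ℝ) : Fin 4 → ℝ := deriv (fun t => zv f g φ u t) v

/-- The normal field `n₁ = ((φ̇ sin v + φ cos v) e₁ + (−φ̇ cos v + φ sin v) e₂ + φ² ξ₁)/√(φ̇² + φ²)`. -/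
def n1 (φ : ℝ → ℝ) (v : ℝ) : Fin 4 → ℝ :=
  (Real.sqrt ((deriv φ v) ^ 2 + (φ v) ^ 2))⁻¹ •
    ((deriv φ v * Real.sin v + φ v * Real.cos v) • e1 +
      (-(deriv φ v) * Real.cos v + φ v * Real.sin v) • e2 + (φ v) ^ 2 • xi1)

/-- The normal field `n₂ = √(−f'/(2g')) (φ cos v e₁ + φ sin v e₂ + ((f'φ² − 2g')/(2f')) ξ₁ + ξ₂)`. -/
def n2 (f g φ : ℝ → ℝ) (u v : ℝ) : Fin 4 → ℝ :=
  Real.sqrt (-(deriv f u) / (2 * deriv g u)) •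
    ((φ v * Real.cos v) • e1 + (φ v * Real.sin v) • e2 +
      ((deriv f u * (φ v) ^ 2 - 2 * deriv g u) / (2 * deriv f u)) • xi1 + xi2)

/-- The curvature `κ_m(u) = (f'g'' − g'f'')/(−2f'g')^{3/2}` of the meridians. -/
def kappam (f g : ℝ → ℝ) (u : ℝ) : ℝ :=
  (deriv f u * deriv (deriv g) u - deriv g u * deriv (deriv f) u) /
    (-2 * deriv f u * deriv g u) ^ ((3 : ℝ) / 2)

/-- The curvature `κ̄(v) = (φφ̈ − 2φ̇² − φ²)/(φ̇² + φ²)^{3/2}`. -/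
def kappabar (φ : ℝ → ℝ) (v : ℝ) : ℝ :=
  (φ v * deriv (deriv φ) v - 2 * (deriv φ v) ^ 2 - (φ v) ^ 2) /
    ((deriv φ v) ^ 2 + (φ v) ^ 2) ^ ((3 : ℝ) / 2)

/-- The mean curvature vector
`H = (1/2)(⟨z_uu,n₁⟩/E + ⟨z_vv,n₁⟩/G) n₁ − (1/2)(⟨z_uu,n₂⟩/E + ⟨z_vv,n₂⟩/G) n₂`,
where `E = ⟨z_u,z_u⟩` and `G = ⟨z_v,z_v⟩`. -/
def Hvec (f g φ : ℝ → ℝ) (u v : ℝ) : Fin 4 → ℝ :=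
  (1 / 2 * (mink (zuu f g φ u v) (n1 φ v) / mink (zu f g φ u v) (zu f g φ u v) +
      mink (zvv f g φ u v) (n1 φ v) / mink (zv f g φ u v) (zv f g φ u v))) • n1 φ v -
  (1 / 2 * (mink (zuu f g φ u v) (n2 f g φ u v) / mink (zu f g φ u v) (zu f g φ u v) +
      mink (zvv f g φ u v) (n2 f g φ u v) / mink (zv f g φ u v) (zv f g φ u v))) • n2 f g φ u v

/-! In the rotating frame `(cos v e₁ + sin v e₂, −sin v e₁ + cos v e₂, ξ₁, ξ₂)` of `rotFrame`
the Minkowski product reads `aa' + bb' − (cd' + dc')` and differentiation in `v` only rotates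
the first two coordinates, so all trigonometry disappears. The normal frame satisfies
`⟨n₁,n₁⟩ = 1`, `⟨n₁,n₂⟩ = 0`, `⟨n₂,n₂⟩ = −1`; hence `H = a n₁ − b n₂` has
`⟨H,H⟩ = a² − b²`, and computing `a = κ̄/(2f)` and `b` gives
`⟨H,H⟩ = (κ̄² − N²/(−2f'g')³)/(4f²)` with `N = f(f''g' − f'g'') + 2f'²g'`. -/

open Topology

theorem neg_div_two_mul_nonneg {a b : ℝ} (h : 0 < -(a * b)) : 0 ≤ -a / (2 * b) := by
  have hb : b ≠ 0 := right_ne_zero_of_mul (neg_pos.mp h).ne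
  rw [show -a / (2 * b) = -(a * b) / (2 * b ^ 2) by field_simp]
  positivity

theorem _root_.ContDiffOn.hasDerivAt_of_isOpen {F : ℝ → ℝ} {S : Set ℝ} {n : WithTop ℕ∞}
    (h : ContDiffOn ℝ n F S) (hn : n ≠ 0) (hS : IsOpen S) {t : ℝ} (ht : t ∈ S) :
    HasDerivAt F (deriv F t) t :=
  ((h.differentiableOn hn).differentiableAt (hS.mem_nhds ht)).hasDerivAt

theorem mink_smul_left (r : ℝ) (x y : Fin 4 → ℝ) : mink (r • x) y = r * mink x y := by
  simp only [mink, Pi.smul_apply, smul_eq_mul]; ring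

theorem mink_smul_right (r : ℝ) (x y : Fin 4 → ℝ) : mink x (r • y) = r * mink x y := by
  simp only [mink, Pi.smul_apply, smul_eq_mul]; ring

theorem mink_sub_smul_self {n₁ n₂ : Fin 4 → ℝ} (h₁₁ : mink n₁ n₁ = 1) (h₁₂ : mink n₁ n₂ = 0)
    (h₂₂ : mink n₂ n₂ = -1) (a b : ℝ) :
    mink (a • n₁ - b • n₂) (a • n₁ - b • n₂) = a ^ 2 - b ^ 2 := by
  simp only [mink, Pi.sub_apply, Pi.smul_apply, smul_eq_mul] at *
  linear_combination a ^ 2 * h₁₁ - 2 * a * b * h₁₂ + b ^ 2 * h₂₂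

def rotFrame (θ a b c d : ℝ) : Fin 4 → ℝ :=
  (a * Real.cos θ - b * Real.sin θ) • e1 + (a * Real.sin θ + b * Real.cos θ) • e2 +
    c • xi1 + d • xi2

theorem mink_rotFrame (θ a b c d a' b' c' d' : ℝ) :
    mink (rotFrame θ a b c d) (rotFrame θ a' b' c' d') = a * a' + b * b' - (c * d' + d * c') := by
  have h2 : Real.sqrt 2 ^ 2 = 2 := Real.sq_sqrt zero_le_two
  simp only [rotFrame, mink, e1, e2, xi1, xi2, Pi.add_apply, Pi.smul_apply, smul_eq_mul,
    Matrix.cons_val_zero, Matrix.cons_val_one, Matrix.cons_val_two, Matrix.cons_val_three,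
    Matrix.head_cons, Matrix.tail_cons]
  field_simp
  linear_combination (a * a' + b * b') * Real.sqrt 2 ^ 2 * Real.sin_sq_add_cos_sq θ
    + (c * d' + d * c') * h2

theorem hasDerivAt_rotFrame {a b c d : ℝ → ℝ} {a' b' c' d' t : ℝ} (ha : HasDerivAt a a' t)
    (hb : HasDerivAt b b' t) (hc : HasDerivAt c c' t) (hd : HasDerivAt d d' t) :
    HasDerivAt (fun s => rotFrame s (a s) (b s) (c s) (d s))
      (rotFrame t (a' - b t) (b' + a t) c' d') t := by
  have hcos := Real.hasDerivAt_cos t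
  have hsin := Real.hasDerivAt_sin t
  refine (((((ha.mul hcos).sub (hb.mul hsin)).smul_const e1).add
    (((ha.mul hsin).add (hb.mul hcos)).smul_const e2)).add (hc.smul_const xi1)).add
      (hd.smul_const xi2) |>.congr_deriv ?_
  simp only [rotFrame]
  congr 4 <;> ring

theorem hasDerivAt_rotFrame_const_angle (θ : ℝ) {a b c d : ℝ → ℝ} {a' b' c' d' t : ℝ}
    (ha : HasDerivAt a a' t) (hb : HasDerivAt b b' t) (hc : HasDerivAt c c' t)
    (hd : HasDerivAt d d' t) :
    HasDerivAt (fun s => rotFrame θ (a s) (b s) (c s) (d s)) (rotFrame θ a' b' c' d') t :=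
  (((((ha.mul_const _).sub (hb.mul_const _)).smul_const e1).add
    (((ha.mul_const _).add (hb.mul_const _)).smul_const e2)).add (hc.smul_const xi1)).add
      (hd.smul_const xi2)

theorem z_eq_rotFrame (f g φ : ℝ → ℝ) (u v : ℝ) :
    z f g φ u v = rotFrame v (f u * φ v) 0 (f u * φ v ^ 2 / 2 + g u) (f u) := by
  simp only [z, rotFrame, zero_mul, sub_zero, add_zero]

theorem n1_eq_rotFrame (φ : ℝ → ℝ) (v : ℝ) :
    n1 φ v = (Real.sqrt (deriv φ v ^ 2 + φ v ^ 2))⁻¹ •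
      rotFrame v (φ v) (-deriv φ v) (φ v ^ 2) 0 := by
  simp only [n1, rotFrame, zero_smul, add_zero]
  congr 4 <;> ring

theorem n2_eq_rotFrame (f g φ : ℝ → ℝ) (u v : ℝ) :
    n2 f g φ u v = Real.sqrt (-deriv f u / (2 * deriv g u)) •
      rotFrame v (φ v) 0 ((deriv f u * φ v ^ 2 - 2 * deriv g u) / (2 * deriv f u)) 1 := by
  simp only [n2, rotFrame, zero_mul, sub_zero, add_zero, one_smul]

theorem zu_eq {f g : ℝ → ℝ} {I : Set ℝ} (hI : IsOpen I) (hf : ContDiffOn ℝ 1 f I)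
    (hg : ContDiffOn ℝ 1 g I) {u : ℝ} (hu : u ∈ I) (φ : ℝ → ℝ) (v : ℝ) :
    zu f g φ u v =
      rotFrame v (deriv f u * φ v) 0 (deriv f u * φ v ^ 2 / 2 + deriv g u) (deriv f u) := by
  have hf' := hf.hasDerivAt_of_isOpen one_ne_zero hI hu
  have hg' := hg.hasDerivAt_of_isOpen one_ne_zero hI hu
  simp only [zu, z_eq_rotFrame]
  exact (hasDerivAt_rotFrame_const_angle v (hf'.mul_const _) (hasDerivAt_const _ _)
    (((hf'.mul_const _).div_const 2).add hg') hf').deriv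

theorem zuu_eq {f g : ℝ → ℝ} {I : Set ℝ} (hI : IsOpen I) (hf : ContDiffOn ℝ 2 f I)
    (hg : ContDiffOn ℝ 2 g I) {u : ℝ} (hu : u ∈ I) (φ : ℝ → ℝ) (v : ℝ) :
    zuu f g φ u v = rotFrame v (deriv (deriv f) u * φ v) 0
      (deriv (deriv f) u * φ v ^ 2 / 2 + deriv (deriv g) u) (deriv (deriv f) u) := by
  have hf'' := (hf.deriv_of_isOpen (m := 1) hI le_rfl).hasDerivAt_of_isOpen one_ne_zero hI hu
  have hg'' := (hg.deriv_of_isOpen (m := 1) hI le_rfl).hasDerivAt_of_isOpen one_ne_zero hI hu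
  have hzu : (fun t => zu f g φ t v) =ᶠ[𝓝 u] fun t =>
      rotFrame v (deriv f t * φ v) 0 (deriv f t * φ v ^ 2 / 2 + deriv g t) (deriv f t) :=
    Filter.eventually_of_mem (hI.mem_nhds hu) fun t ht =>
      zu_eq hI (hf.of_le one_le_two) (hg.of_le one_le_two) ht φ v
  rw [zuu, hzu.deriv_eq]
  exact (hasDerivAt_rotFrame_const_angle v (hf''.mul_const _) (hasDerivAt_const _ _)
    (((hf''.mul_const _).div_const 2).add hg'') hf'').deriv

theorem zv_eq {φ : ℝ → ℝ} {J : Set ℝ} (hJ : IsOpen J) (hφ : ContDiffOn ℝ 1 φ J) {v : ℝ}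
    (hv : v ∈ J) (f g : ℝ → ℝ) (u : ℝ) :
    zv f g φ u v = rotFrame v (f u * deriv φ v) (f u * φ v) (f u * φ v * deriv φ v) 0 := by
  have hφ' := hφ.hasDerivAt_of_isOpen one_ne_zero hJ hv
  simp only [zv, z_eq_rotFrame]
  refine (hasDerivAt_rotFrame (hφ'.const_mul (f u)) (hasDerivAt_const _ _)
    ((((hφ'.pow 2).const_mul (f u)).div_const 2).add_const (g u))
    (hasDerivAt_const _ _)).deriv.trans ?_
  congr 1 <;> ring

theorem zvv_eq {φ : ℝ → ℝ} {J : Set ℝ} (hJ : IsOpen J) (hφ : ContDiffOn ℝ 2 φ J) {v : ℝ}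
    (hv : v ∈ J) (f g : ℝ → ℝ) (u : ℝ) :
    zvv f g φ u v = rotFrame v (f u * (deriv (deriv φ) v - φ v)) (2 * f u * deriv φ v)
      (f u * (deriv φ v ^ 2 + φ v * deriv (deriv φ) v)) 0 := by
  have hφ' := hφ.hasDerivAt_of_isOpen two_ne_zero hJ hv
  have hφ'' := (hφ.deriv_of_isOpen (m := 1) hJ le_rfl).hasDerivAt_of_isOpen one_ne_zero hJ hv
  have hzv : (fun t => zv f g φ u t) =ᶠ[𝓝 v] fun t =>
      rotFrame t (f u * deriv φ t) (f u * φ t) (f u * φ t * deriv φ t) 0 :=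
    Filter.eventually_of_mem (hJ.mem_nhds hv) fun t ht =>
      zv_eq hJ (hφ.of_le one_le_two) ht f g u
  rw [zvv, hzv.deriv_eq]
  refine (hasDerivAt_rotFrame (hφ''.const_mul (f u)) (hφ'.const_mul (f u))
    ((hφ'.const_mul (f u)).mul hφ'') (hasDerivAt_const _ _)).deriv.trans ?_
  congr 1 <;> ring

theorem mink_n1_self {φ : ℝ → ℝ} {v : ℝ} (hφv : 0 < deriv φ v ^ 2 + φ v ^ 2) :
    mink (n1 φ v) (n1 φ v) = 1 := by
  rw [n1_eq_rotFrame, mink_smul_left, mink_smul_right, mink_rotFrame, ← mul_assoc,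
    ← mul_inv, Real.mul_self_sqrt hφv.le]
  field_simp
  ring

theorem mink_n1_n2 (f g φ : ℝ → ℝ) (u v : ℝ) : mink (n1 φ v) (n2 f g φ u v) = 0 := by
  rw [n1_eq_rotFrame, n2_eq_rotFrame, mink_smul_left, mink_smul_right, mink_rotFrame]
  ring

theorem mink_n2_self {f g : ℝ → ℝ} {u : ℝ} (hfg : 0 < -(deriv f u * deriv g u)) (φ : ℝ → ℝ)
    (v : ℝ) : mink (n2 f g φ u v) (n2 f g φ u v) = -1 := by
  obtain ⟨hf', hg'⟩ := mul_ne_zero_iff.mp (neg_pos.mp hfg).ne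
  rw [n2_eq_rotFrame, mink_smul_left, mink_smul_right, mink_rotFrame, ← mul_assoc,
    Real.mul_self_sqrt (neg_div_two_mul_nonneg hfg)]
  field_simp
  ring

theorem kappabar_eq (φ : ℝ → ℝ) (v : ℝ) :
    kappabar φ v = (φ v * deriv (deriv φ) v - 2 * deriv φ v ^ 2 - φ v ^ 2) /
      Real.sqrt (deriv φ v ^ 2 + φ v ^ 2) ^ 3 := by
  rw [kappabar, Real.rpow_div_two_eq_sqrt _ (by positivity), Real.rpow_ofNat]

theorem Hvec_eq {I J : Set ℝ} (hI : IsOpen I) (hJ : IsOpen J) {f g φ : ℝ → ℝ}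
    (hf : ContDiffOn ℝ 2 f I) (hg : ContDiffOn ℝ 2 g I) (hφ : ContDiffOn ℝ 2 φ J) {u v : ℝ}
    (hu : u ∈ I) (hv : v ∈ J) (hfu : f u ≠ 0) (hfg : 0 < -(deriv f u * deriv g u))
    (hφv : 0 < deriv φ v ^ 2 + φ v ^ 2) :
    Hvec f g φ u v = (kappabar φ v / (2 * f u)) • n1 φ v -
      (Real.sqrt (-deriv f u / (2 * deriv g u)) *
        (f u * (deriv (deriv f) u * deriv g u - deriv f u * deriv (deriv g) u) +
          2 * deriv f u * deriv g u * deriv f u) /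
        (-4 * f u * deriv f u ^ 2 * deriv g u)) • n2 f g φ u v := by
  obtain ⟨hf', hg'⟩ := mul_ne_zero_iff.mp (neg_pos.mp hfg).ne
  have hs : Real.sqrt (deriv φ v ^ 2 + φ v ^ 2) ≠ 0 := (Real.sqrt_pos.2 hφv).ne'
  have hs2 := Real.sq_sqrt hφv.le
  have hE : mink (zu f g φ u v) (zu f g φ u v) = -2 * deriv f u * deriv g u := by
    rw [zu_eq hI (hf.of_le one_le_two) (hg.of_le one_le_two) hu, mink_rotFrame]; ring
  have hG : mink (zv f g φ u v) (zv f g φ u v) = f u ^ 2 * (deriv φ v ^ 2 + φ v ^ 2) := by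
    rw [zv_eq hJ (hφ.of_le one_le_two) hv, mink_rotFrame]; ring
  rw [Hvec, hE, hG, zuu_eq hI hf hg hu, zvv_eq hJ hφ hv, n1_eq_rotFrame, n2_eq_rotFrame]
  simp only [mink_smul_right, mink_rotFrame]
  rw [kappabar_eq]
  congr 2
  · field_simp
    rw [hs2]
    ring
  · field_simp
    ring

theorem mink_Hvec_self {I J : Set ℝ} (hI : IsOpen I) (hJ : IsOpen J) {f g φ : ℝ → ℝ}
    (hf : ContDiffOn ℝ 2 f I) (hg : ContDiffOn ℝ 2 g I) (hφ : ContDiffOn ℝ 2 φ J) {u v : ℝ}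
    (hu : u ∈ I) (hv : v ∈ J) (hfu : f u ≠ 0) (hfg : 0 < -(deriv f u * deriv g u))
    (hφv : 0 < deriv φ v ^ 2 + φ v ^ 2) :
    mink (Hvec f g φ u v) (Hvec f g φ u v) =
      (kappabar φ v ^ 2 -
        (f u * (deriv (deriv f) u * deriv g u - deriv f u * deriv (deriv g) u) +
            2 * deriv f u * deriv g u * deriv f u) ^ 2 /
          (-2 * deriv f u * deriv g u) ^ 3) / (4 * f u ^ 2) := by
  obtain ⟨hf', hg'⟩ := mul_ne_zero_iff.mp (neg_pos.mp hfg).ne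
  rw [Hvec_eq hI hJ hf hg hφ hu hv hfu hfg hφv,
    mink_sub_smul_self (mink_n1_self hφv) (mink_n1_n2 f g φ u v) (mink_n2_self hfg φ v)]
  simp only [div_pow, mul_pow, Real.sq_sqrt (neg_div_two_mul_nonneg hfg)]
  field_simp
  ring

theorem statement7_general
    (I J : Set ℝ) (hIopen : IsOpen I)
    (hJopen : IsOpen J)
    (f g φ : ℝ → ℝ)
    (hf : ContDiffOn ℝ (⊤ : ℕ∞) f I) (hg : ContDiffOn ℝ (⊤ : ℕ∞) g I)
    (hφ : ContDiffOn ℝ (⊤ : ℕ∞) φ J)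
    (hfpos : ∀ u ∈ I, 0 < f u)
    (hfg : ∀ u ∈ I, 0 < -(deriv f u * deriv g u))
    (hφpos : ∀ v ∈ J, 0 < (deriv φ v) ^ 2 + (φ v) ^ 2)
    (u : ℝ) (hu : u ∈ I) (v : ℝ) (hv : v ∈ J) :
    mink (Hvec f g φ u v) (Hvec f g φ u v) = 0 ↔
      (kappabar φ v) ^ 2 =
        (f u * (deriv (deriv f) u * deriv g u - deriv f u * deriv (deriv g) u) +
            2 * deriv f u * deriv g u * deriv f u) ^ 2 /
          (-2 * deriv f u * deriv g u) ^ 3 := by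
  have h2 : (2 : WithTop ℕ∞) ≤ (⊤ : ℕ∞) := WithTop.coe_le_coe.mpr le_top
  have hfu := (hfpos u hu).ne'
  rw [mink_Hvec_self hIopen hJopen (hf.of_le h2) (hg.of_le h2) (hφ.of_le h2) hu hv hfu
    (hfg u hu) (hφpos v hv), div_eq_zero_iff, sub_eq_zero]
  simp [hfu]

/-- assuming `f' > 0` (hence `g' < 0`), at a fixed point `(u,v)` the mean
curvature vector of the meridian surface of parabolic type is lightlike if and only if
`κ̄(v)² = (f(f''g' − f'g'') + 2f'g'f')²/(−2f'g')³`. -/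
theorem statement7
    (I J : Set ℝ) (hIopen : IsOpen I) (hIconn : IsPreconnected I)
    (hJopen : IsOpen J) (hJconn : IsPreconnected J)
    (f g φ : ℝ → ℝ)
    (hf : ContDiffOn ℝ (⊤ : ℕ∞) f I) (hg : ContDiffOn ℝ (⊤ : ℕ∞) g I)
    (hφ : ContDiffOn ℝ (⊤ : ℕ∞) φ J)
    (hfpos : ∀ u ∈ I, 0 < f u)
    (hfg : ∀ u ∈ I, 0 < -(deriv f u * deriv g u))
    (hφpos : ∀ v ∈ J, 0 < (deriv φ v) ^ 2 + (φ v) ^ 2)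
    (hfd : ∀ u ∈ I, 0 < deriv f u) (hgd : ∀ u ∈ I, deriv g u < 0)
    (u : ℝ) (hu : u ∈ I) (v : ℝ) (hv : v ∈ J) :
    mink (Hvec f g φ u v) (Hvec f g φ u v) = 0 ↔
      (kappabar φ v) ^ 2 =
        (f u * (deriv (deriv f) u * deriv g u - deriv f u * deriv (deriv g) u) +
            2 * deriv f u * deriv g u * deriv f u) ^ 2 /
          (-2 * deriv f u * deriv g u) ^ 3 :=
  statement7_general I J hIopen hJopen f g φ hf hg hφ hfpos hfg hφpos u hu v hv

end
end MeridianParabolic
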